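/- For all λ-term nodes ⟨t₁, p₁⟩ and ⟨t₂, p₂⟩: ⟨t₁, p₁⟩ is bisimilar to ⟨t₂, p₂⟩ if and only if globalize_naive(t₁)[p₁] = globalize_naive(t₂)[p₂]. -/

import Mathlib

/-!
Position by position, the naive globalization of `t` at `p` is the naive globalization of
`t.resolve p`: the subterm at `p` in which every variable bound above `p` has been replaced by
the global variable of its binder, itself resolved. Equality of these is a bisimulation: the
steps ↓, ↙, ↘ preserve it, and an ↑ step from a variable leads to binders whose resolved
`λ`-terms are the label of the global variable. Conversely, bisimilar nodes have equal resolved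
subterms, by induction on the total length of the two positions. Below the nodes the shapes
agree; a variable bound below both nodes is bound at corresponding binders, because a node is
bisimilar to none of its proper descendants; a variable bound above both nodes is replaced by
the global variables of bisimilar binders strictly above, to which the induction applies.
-/

namespace HashAlpha

/-- g-terms: λ-terms with de Bruijn indices, extended with global variables `gvar t`. -/
inductive GTerm : Type
  | var : ℕ → GTerm
  | app : GTerm → GTerm → GTerm
  | lam : GTerm → GTerm
  | gvar : GTerm → GTerm
  deriving DecidableEq

/-- A g-term is a pure λ-term if it contains no global variables. -/
def GTerm.IsPure : GTerm → Prop
  | .var _ => True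
  | .app a b => a.IsPure ∧ b.IsPure
  | .lam a => a.IsPure
  | .gvar _ => False

/-- Directions for term positions: ↓, ↙, ↘. -/
inductive Dir : Type
  | down | left | right
  deriving DecidableEq

/-- A term position is a word over {↓, ↙, ↘}. -/
abbrev Pos := List Dir

/-- `|p|_λ`: the number of ↓'s in a position. -/
def lamDepth (p : Pos) : ℕ := p.count Dir.down

/-- Term indexing `t[p]` (partial; does not descend into global variables). -/
def GTerm.index : GTerm → Pos → Option GTerm
  | t, [] => some t
  | .app a _, .left :: p => a.index p
  | .app _ b, .right :: p => b.index p
  | .lam a, .down :: p => a.index p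
  | _, _ => none

/-- `valid(t)`: the set of positions where `t[p]` is defined. -/
def Valid (t : GTerm) : Set Pos := {p | (t.index p).isSome}

/-- `vars(t)`: positions of variables. -/
def Vars (t : GTerm) : Set Pos := {p | ∃ i, t.index p = some (.var i)}

/-- `free(t)`: positions of free variables. -/
def Free (t : GTerm) : Set Pos :=
  {p | ∃ i, t.index p = some (.var i) ∧ lamDepth p ≤ i}

/-- A term is closed if it has no free variables. -/
def Closed (t : GTerm) : Prop := Free t = ∅

/-- `p` is locally closed in `t`: every free variable of `t[p]` is also free in `t`. -/
def LocallyClosed (t : GTerm) (p : Pos) : Prop :=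
  p ∈ Valid t ∧ ∀ u, t.index p = some u → ∀ q ∈ Free u, p ++ q ∈ Free t

/-- Subtract `d0` from every free variable (`d` is the current binder depth). -/
def declift (d0 : ℕ) : GTerm → ℕ → GTerm
  | .var j, d => if d ≤ j then .var (j - d0) else .var j
  | .app a b, d => .app (declift d0 a d) (declift d0 b d)
  | .lam a, d => .lam (declift d0 a (d + 1))
  | .gvar a, _ => .gvar a

/-- The lift `⟨t⟩p`: equal to `t[p]` except every free variable of `t[p]` is
decremented by `|p|_λ`. -/
def liftAt (t : GTerm) (p : Pos) : Option GTerm :=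
  (t.index p).map (fun u => declift (lamDepth p) u 0)

/-- Transition labels: ↓, ↙, ↘ and ↑. -/
inductive Lab : Type
  | down | left | right | up
  deriving DecidableEq

def Lab.ofDir : Dir → Lab
  | .down => .down
  | .left => .left
  | .right => .right

/-- Transitions between term nodes. -/
inductive Trans : GTerm × Pos → Lab → GTerm × Pos → Prop
  | dir (t : GTerm) (p : Pos) (x : Dir) :
      (p ++ [x]) ∈ Valid t → Trans (t, p) (Lab.ofDir x) (t, p ++ [x])
  | up (t : GTerm) (q r : Pos) :
      t.index (q ++ Dir.down :: r) = some (.var (lamDepth r)) →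
      Trans (t, q ++ Dir.down :: r) Lab.up (t, q)

/-- `R` is a bisimulation. -/
def IsBisim (R : GTerm × Pos → GTerm × Pos → Prop) : Prop :=
  ∀ n₁ n₂, R n₁ n₂ → ∀ x : Lab,
    (∀ n₁', Trans n₁ x n₁' → ∃ n₂', Trans n₂ x n₂' ∧ R n₁' n₂') ∧
    (∀ n₂', Trans n₂ x n₂' → ∃ n₁', Trans n₁ x n₁' ∧ R n₁' n₂')

/-- Two nodes are bisimilar when some bisimulation relates them. -/
def Bisim (n₁ n₂ : GTerm × Pos) : Prop := ∃ R, IsBisim R ∧ R n₁ n₂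

/-- `(t, p)` is a term node: `t` is closed and `p ∈ valid(t)`. -/
def IsNode (t : GTerm) (p : Pos) : Prop := Closed t ∧ p ∈ Valid t

/-- A single fork between term nodes (let-abs rule or closed rule). -/
def SingleFork (n₁ n₂ : GTerm × Pos) : Prop :=
  (∃ t p q₁ q₂ r u,
      n₁ = (t, p ++ q₁ ++ r) ∧ n₂ = (t, p ++ q₂ ++ r) ∧
      IsNode t (p ++ q₁ ++ r) ∧ IsNode t (p ++ q₂ ++ r) ∧
      t.index p = some u ∧ LocallyClosed u q₁ ∧ liftAt u q₁ = liftAt u q₂) ∨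
  (∃ t₁ t₂ p₁ p₂ r u,
      n₁ = (t₁, p₁ ++ r) ∧ n₂ = (t₂, p₂ ++ r) ∧
      IsNode t₁ (p₁ ++ r) ∧ IsNode t₂ (p₂ ++ r) ∧
      t₁.index p₁ = some u ∧ Closed u ∧ t₂.index p₂ = some u)

/-- Fork equivalence: the transitive closure of single forks. -/
def ForkEquiv : GTerm × Pos → GTerm × Pos → Prop := Relation.TransGen SingleFork

/-- Shift free variables ≥ `c` up by `d`. -/
def shiftAux (c d : ℕ) : GTerm → GTerm
  | .var j => if j < c then .var j else .var (j + d)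
  | .app a b => .app (shiftAux c d a) (shiftAux c d b)
  | .lam a => .lam (shiftAux (c + 1) d a)
  | .gvar a => .gvar a

/-- Capture-avoiding substitution of free variable `i` by `u` (at current depth `d`). -/
def substAux (i : ℕ) (u : GTerm) : ℕ → GTerm → GTerm
  | d, .var j => if j = i + d then shiftAux 0 d u else .var j
  | d, .app a b => .app (substAux i u d a) (substAux i u d b)
  | d, .lam a => .lam (substAux i u (d + 1) a)
  | _, .gvar a => .gvar a

/-- `t[i := u]`: capture-avoiding substitution of variable `i` by `u` in `t`. -/
def subst (i : ℕ) (u : GTerm) (t : GTerm) : GTerm := substAux i u 0 t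

/-- Simultaneous capture-avoiding substitution of variable `i` by `σᵢ`
(at current depth `d`). -/
def msubstAux (σ : List GTerm) : ℕ → GTerm → GTerm
  | d, .var j =>
      if j < d then .var j else shiftAux 0 d (σ.getD (j - d) (.var (j - d)))
  | d, .app a b => .app (msubstAux σ d a) (msubstAux σ d b)
  | d, .lam a => .lam (msubstAux σ (d + 1) a)
  | _, .gvar a => .gvar a

/-- `tσ`: simultaneous substitution of each variable `i` by the `i`-th element of `σ`. -/
def msubst (σ : List GTerm) (t : GTerm) : GTerm := msubstAux σ 0 t

/-- Term size (the term summary `|t|`); global variables count as leaves. -/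
def gsize : GTerm → ℕ
  | .var _ => 1
  | .gvar _ => 1
  | .app a b => gsize a + gsize b + 1
  | .lam a => gsize a + 1

theorem gsize_shiftAux (c d : ℕ) (t : GTerm) : gsize (shiftAux c d t) = gsize t := by
  induction t generalizing c with
  | var j => simp only [shiftAux]; split <;> rfl
  | app a b iha ihb => simp [shiftAux, gsize, iha, ihb]
  | lam a ih => simp [shiftAux, gsize, ih]
  | gvar a => rfl

theorem gsize_substAux_gvar (i : ℕ) (w : GTerm) (d : ℕ) (t : GTerm) :
    gsize (substAux i (.gvar w) d t) = gsize t := by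
  induction t generalizing d with
  | var j => simp only [substAux]; split <;> rfl
  | app a b iha ihb => simp [substAux, gsize, iha, ihb]
  | lam a ih => simp [substAux, gsize, ih]
  | gvar a => rfl

theorem gsize_msubstAux (σ : List GTerm) (h : ∀ u ∈ σ, ∃ w, u = .gvar w)
    (d : ℕ) (t : GTerm) : gsize (msubstAux σ d t) = gsize t := by
  induction t generalizing d with
  | var j =>
    simp only [msubstAux]
    split
    · rfl
    · rw [gsize_shiftAux]
      rcases Nat.lt_or_ge (j - d) σ.length with hl | hl
      · rw [List.getD_eq_getElem _ _ hl]
        obtain ⟨w, hw⟩ := h _ (List.getElem_mem hl)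
        rw [hw]; rfl
      · rw [List.getD_eq_default _ _ hl]; rfl
  | app a b iha ihb => simp [msubstAux, gsize, iha, ihb]
  | lam a ih => simp [msubstAux, gsize, ih]
  | gvar a => rfl

theorem gsize_msubst (σ : List GTerm) (h : ∀ u ∈ σ, ∃ w, u = .gvar w)
    (t : GTerm) : gsize (msubst σ t) = gsize t :=
  gsize_msubstAux σ h 0 t

/-- The naive globalization procedure. -/
def globalizeNaive : GTerm → GTerm
  | .lam t => .lam (globalizeNaive (subst 0 (.gvar (.lam t)) t))
  | .app t u => .app (globalizeNaive t) (globalizeNaive u)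
  | .gvar t => .gvar t
  | .var i => .var i
termination_by t => gsize t
decreasing_by
  · simp only [subst, gsize_substAux_gvar, gsize]; omega
  · simp only [gsize]; omega
  · simp only [gsize]; omega

/-- The strongly connected component of a closed g-term: positions all of whose
nonempty prefixes index open terms. -/
def SCC (t : GTerm) : Set Pos :=
  {p | p ∈ Valid t ∧ ∀ p' u, p' ≠ [] → p' <+: p → t.index p' = some u → ¬ Closed u}

/-- `duplicates(t)`: strict subterms in the SCC of `t` whose term summary (size)
is not unique within the SCC. -/
def duplicates (t : GTerm) : Set GTerm :=
  {u | ∃ p q v, p ∈ SCC t ∧ q ∈ SCC t ∧ p ≠ [] ∧ q ≠ [] ∧ p ≠ q ∧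
      t.index p = some u ∧ t.index q = some v ∧ gsize u = gsize v}

open Classical in
mutual
/-- Efficient globalization. -/
noncomputable def globalize (r : GTerm) : GTerm :=
  globalizeScc r [] (by simp) r
termination_by (gsize r, 2)
decreasing_by
  apply Prod.Lex.right; omega

noncomputable def globalizeScc (r : GTerm) (σ : List GTerm)
    (h : ∀ u ∈ σ, ∃ w, u = GTerm.gvar w) : GTerm → GTerm
  | .lam t => .lam (globalizeStep r (.gvar (.app r t) :: σ)
      (by
        intro u hu
        rcases List.mem_cons.mp hu with h' | h'
        · exact ⟨_, h'⟩
        · exact h u h') t)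
  | .app t u => .app (globalizeStep r σ h t) (globalizeStep r σ h u)
  | .gvar t => .gvar t
  | .var i => msubst σ (.var i)
termination_by t => (gsize t, 1)
decreasing_by
  · apply Prod.Lex.left; simp only [gsize]; omega
  · apply Prod.Lex.left; simp only [gsize]; omega
  · apply Prod.Lex.left; simp only [gsize]; omega

noncomputable def globalizeStep (r : GTerm) (σ : List GTerm)
    (h : ∀ u ∈ σ, ∃ w, u = GTerm.gvar w) (t : GTerm) : GTerm :=
  if Closed t ∨ t ∈ duplicates r then globalize (msubst σ t)
  else globalizeScc r σ h t
termination_by (gsize t, 3)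
decreasing_by
  · rw [gsize_msubst σ h]; apply Prod.Lex.right; omega
  · apply Prod.Lex.right; omega
end

open GTerm

@[simp] theorem lamDepth_nil : lamDepth [] = 0 := rfl

@[simp] theorem lamDepth_cons (x : Dir) (p : Pos) :
    lamDepth (x :: p) = lamDepth p + if x = .down then 1 else 0 := by
  cases x <;> simp [lamDepth]

@[simp] theorem lamDepth_append (p q : Pos) : lamDepth (p ++ q) = lamDepth p + lamDepth q :=
  List.count_append ..

theorem exists_binder {j : ℕ} {p : Pos} (h : j < lamDepth p) :
    ∃ q r, p = q ++ .down :: r ∧ lamDepth r = j := by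
  induction p with
  | nil => simp at h
  | cons x p ih =>
    by_cases hj : j < lamDepth p
    · obtain ⟨q, r, rfl, hr⟩ := ih hj
      exact ⟨x :: q, r, rfl, hr⟩
    · obtain rfl : x = .down := by by_contra hx; simp [hx] at h; omega
      exact ⟨[], p, rfl, by simp at h; omega⟩

theorem mem_valid {t : GTerm} {p : Pos} : p ∈ Valid t ↔ (t.index p).isSome := Iff.rfl

namespace GTerm

@[simp] theorem index_nil (t : GTerm) : t.index [] = some t := by cases t <;> rfl

theorem index_append (t : GTerm) (p q : Pos) :
    t.index (p ++ q) = (t.index p).bind (·.index q) := by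
  induction p generalizing t with
  | nil => simp
  | cons x p ih => cases t <;> cases x <;> simp [GTerm.index, ih]

theorem valid_of_prefix {t : GTerm} {p q : Pos} (h : p <+: q) (hq : q ∈ Valid t) :
    p ∈ Valid t := by
  obtain ⟨r, rfl⟩ := h
  rw [mem_valid, index_append] at hq
  cases hp : t.index p <;> simp_all [mem_valid]

theorem valid_append_iff {t v : GTerm} {p r : Pos} (h : t.index p = some v) :
    p ++ r ∈ Valid t ↔ r ∈ Valid v := by
  simp [mem_valid, index_append, h]

theorem length_lt_gsize_of_valid {t : GTerm} {p : Pos} (h : p ∈ Valid t) :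
    p.length < gsize t := by
  induction p generalizing t with
  | nil => cases t <;> simp [gsize]
  | cons x p ih =>
    cases t <;> cases x <;> simp [mem_valid, GTerm.index] at h <;> have := ih h <;> simp [gsize] <;>
      omega

theorem IsPure.index {t v : GTerm} {p : Pos} (ht : t.IsPure) (h : t.index p = some v) :
    v.IsPure := by
  induction p generalizing t with
  | nil => simp_all
  | cons x p ih =>
    cases t <;> cases x <;> simp only [GTerm.index, reduceCtorEq] at h <;>
      simp only [IsPure] at ht
    exacts [ih ht.1 h, ih ht.2 h, ih ht h]

def head : GTerm → GTerm
  | .var i => .var i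
  | .gvar w => .gvar w
  | .app _ _ => .app (.var 0) (.var 0)
  | .lam _ => .lam (.var 0)

theorem ext_of_head_index {a b : GTerm}
    (h : ∀ r, (a.index r).map head = (b.index r).map head) : a = b := by
  have hroot := h []
  induction a generalizing b with
  | var i => cases b <;> simp_all [head]
  | gvar w => cases b <;> simp_all [head]
  | app a₁ a₂ ih₁ ih₂ =>
    cases b <;> simp [head] at hroot
    rw [ih₁ (fun r => h (.left :: r)) (h [.left]), ih₂ (fun r => h (.right :: r)) (h [.right])]
  | lam a ih =>
    cases b <;> simp [head] at hroot
    rw [ih (fun r => h (.down :: r)) (h [.down])]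

theorem head_eq_of_valid_singleton_iff {v₁ v₂ : GTerm} (hvar : ∀ j, v₁ ≠ .var j)
    (hgvar : ∀ w, v₁ ≠ .gvar w) (h : ∀ x, [x] ∈ Valid v₁ ↔ [x] ∈ Valid v₂) :
    head v₁ = head v₂ := by
  have hl := h .left
  have hd := h .down
  cases v₁ <;> cases v₂ <;> simp_all [mem_valid, GTerm.index, head]

end GTerm

theorem Closed.lt_lamDepth {t : GTerm} {p : Pos} {j : ℕ} (hc : Closed t)
    (h : t.index p = some (.var j)) : j < lamDepth p := by
  by_contra hj
  exact Set.eq_empty_iff_forall_notMem.mp hc p ⟨j, h, by omega⟩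

theorem trans_ofDir_iff {t : GTerm} {p : Pos} {x : Dir} {n : GTerm × Pos} :
    Trans (t, p) (Lab.ofDir x) n ↔ n = (t, p ++ [x]) ∧ p ++ [x] ∈ Valid t := by
  constructor
  · generalize hl : Lab.ofDir x = l
    rintro (⟨_, _, y, hy⟩ | _)
    · obtain rfl : x = y := by cases x <;> cases y <;> simp_all [Lab.ofDir]
      exact ⟨rfl, hy⟩
    · cases x <;> simp [Lab.ofDir] at hl
  · rintro ⟨rfl, hv⟩
    exact Trans.dir t p x hv

theorem trans_up_iff {t : GTerm} {p : Pos} {n : GTerm × Pos} :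
    Trans (t, p) .up n ↔
      ∃ q r, p = q ++ .down :: r ∧ t.index p = some (.var (lamDepth r)) ∧ n = (t, q) := by
  constructor
  · generalize hl : Lab.up = l
    rintro (⟨_, _, x, _⟩ | ⟨_, q, r, hv⟩)
    · cases x <;> simp [Lab.ofDir] at hl
    · exact ⟨q, r, rfl, hv, rfl⟩
  · rintro ⟨q, r, rfl, hv, rfl⟩
    exact Trans.up t q r hv

namespace Bisim

theorem symm {n₁ n₂ : GTerm × Pos} (h : Bisim n₁ n₂) : Bisim n₂ n₁ := by
  obtain ⟨R, hR, hn⟩ := h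
  exact ⟨fun a b => R b a, fun a b hab x => (hR b a hab x).symm, hn⟩

theorem trans {n₁ n₂ n₃ : GTerm × Pos} (h₁₂ : Bisim n₁ n₂) (h₂₃ : Bisim n₂ n₃) :
    Bisim n₁ n₃ := by
  obtain ⟨R, hR, hn⟩ := h₁₂
  obtain ⟨S, hS, hm⟩ := h₂₃
  refine ⟨fun a c => ∃ b, R a b ∧ S b c, ?_, n₂, hn, hm⟩
  rintro a c ⟨b, hab, hbc⟩ x
  constructor
  · intro a' ha'
    obtain ⟨b', hb', hRb⟩ := (hR a b hab x).1 a' ha'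
    obtain ⟨c', hc', hSc⟩ := (hS b c hbc x).1 b' hb'
    exact ⟨c', hc', b', hRb, hSc⟩
  · intro c' hc'
    obtain ⟨b', hb', hSb⟩ := (hS b c hbc x).2 c' hc'
    obtain ⟨a', ha', hRa⟩ := (hR a b hab x).2 b' hb'
    exact ⟨a', ha', b', hRa, hSb⟩

theorem exists_trans {n₁ n₂ m₁ : GTerm × Pos} {x : Lab} (h : Bisim n₁ n₂)
    (ht : Trans n₁ x m₁) : ∃ m₂, Trans n₂ x m₂ ∧ Bisim m₁ m₂ := by
  obtain ⟨R, hR, hn⟩ := h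
  obtain ⟨m₂, hm₂, hRm⟩ := (hR n₁ n₂ hn x).1 m₁ ht
  exact ⟨m₂, hm₂, R, hR, hRm⟩

theorem append {t₁ t₂ : GTerm} {p₁ p₂ r : Pos} (h : Bisim (t₁, p₁) (t₂, p₂))
    (hv₂ : p₂ ∈ Valid t₂) (hv₁ : p₁ ++ r ∈ Valid t₁) :
    p₂ ++ r ∈ Valid t₂ ∧ Bisim (t₁, p₁ ++ r) (t₂, p₂ ++ r) := by
  induction r generalizing p₁ p₂ with
  | nil => simpa using ⟨hv₂, h⟩
  | cons x r ih =>
    have hx₁ : p₁ ++ [x] ∈ Valid t₁ := valid_of_prefix ⟨r, by simp⟩ hv₁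
    obtain ⟨m₂, hm₂, h'⟩ := h.exists_trans (trans_ofDir_iff.2 ⟨rfl, hx₁⟩)
    obtain ⟨rfl, hx₂⟩ := trans_ofDir_iff.1 hm₂
    simpa using ih h' hx₂ (by simpa using hv₁)

theorem valid_append_iff {t₁ t₂ : GTerm} {p₁ p₂ r : Pos} (h : Bisim (t₁, p₁) (t₂, p₂))
    (hv₁ : p₁ ∈ Valid t₁) (hv₂ : p₂ ∈ Valid t₂) : p₁ ++ r ∈ Valid t₁ ↔ p₂ ++ r ∈ Valid t₂ :=
  ⟨fun h' => (h.append hv₂ h').1, fun h' => (h.symm.append hv₁ h').1⟩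

theorem head_eq {t₁ t₂ v₁ v₂ : GTerm} {p₁ p₂ : Pos} (h : Bisim (t₁, p₁) (t₂, p₂))
    (hv₁ : t₁.index p₁ = some v₁) (hv₂ : t₂.index p₂ = some v₂) (hvar : ∀ j, v₁ ≠ .var j)
    (hgvar : ∀ w, v₁ ≠ .gvar w) : head v₁ = head v₂ := by
  refine head_eq_of_valid_singleton_iff hvar hgvar fun x => ?_
  rw [← GTerm.valid_append_iff hv₁, ← GTerm.valid_append_iff hv₂]
  exact h.valid_append_iff (by simp [mem_valid, hv₁]) (by simp [mem_valid, hv₂])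

/-- Bisimilar nodes have the same valid continuations, so `z`, `z z`, `z z z`, … would all be
valid below `p`. -/
theorem eq_nil_of_append {t : GTerm} {p z : Pos} (hv : p ++ z ∈ Valid t)
    (h : Bisim (t, p) (t, p ++ z)) : z = [] := by
  have hlong : ∀ k, ∃ r, p ++ r ∈ Valid t ∧ k * z.length ≤ r.length := by
    intro k
    induction k with
    | zero => exact ⟨[], by simpa using valid_of_prefix ⟨z, rfl⟩ hv, by simp⟩
    | succ k ih =>
      obtain ⟨r, hr, hk⟩ := ih
      refine ⟨z ++ r, by simpa using (h.append hv hr).1, ?_⟩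
      simp only [List.length_append]
      nlinarith
  obtain ⟨r, hr, hk⟩ := hlong (gsize t)
  have hlt := length_lt_gsize_of_valid hr
  rw [List.length_append] at hlt
  by_contra hz
  have := List.length_pos_iff.2 hz
  nlinarith

theorem eq_of_prefix {t : GTerm} {a b c : Pos} (ha : a <+: c) (hb : b <+: c)
    (hc : c ∈ Valid t) (h : Bisim (t, a) (t, b)) : a = b := by
  rcases List.prefix_or_prefix_of_prefix ha hb with ⟨z, rfl⟩ | ⟨z, rfl⟩
  · simp [eq_nil_of_append (valid_of_prefix hb hc) h]
  · simp [eq_nil_of_append (valid_of_prefix ha hc) h.symm]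

theorem eq_append_of_prefix {t₁ t₂ : GTerm} {p₁ p₂ c r β : Pos} (h : Bisim (t₁, p₁) (t₂, p₂))
    (hv₂ : p₂ ∈ Valid t₂) (hv₁ : p₁ ++ r ∈ Valid t₁) (hvr : p₂ ++ r ∈ Valid t₂)
    (hc : c <+: r) (hβ : β <+: p₂ ++ r) (hβc : Bisim (t₁, p₁ ++ c) (t₂, β)) : β = p₂ ++ c := by
  have hc₁ : p₁ ++ c ∈ Valid t₁ := valid_of_prefix ((List.prefix_append_right_inj p₁).2 hc) hv₁
  exact eq_of_prefix hβ ((List.prefix_append_right_inj p₂).2 hc) hvr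
    (hβc.symm.trans (h.append hv₂ hc₁).2)

end Bisim

theorem index_substAux_gvar (s : GTerm) (p : Pos) (i d : ℕ) (w : GTerm) :
    (substAux i (.gvar w) d s).index p
      = (s.index p).map (substAux i (.gvar w) (d + lamDepth p)) := by
  induction p generalizing s d with
  | nil => simp
  | cons x p ih =>
    cases s with
    | var j => simp only [substAux]; split <;> cases x <;> simp [GTerm.index, shiftAux]
    | gvar a => cases x <;> simp [GTerm.index, substAux]
    | app a b => cases x <;> simp [GTerm.index, substAux, ih]
    | lam a => cases x <;> simp [GTerm.index, substAux, ih, Nat.add_assoc, Nat.add_comm 1]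

inductive Globalized : ℕ → GTerm → GTerm → Prop
  | var (d j : ℕ) : Globalized d (.var j) (.var j)
  | free (d j w) : d ≤ j → Globalized d (.var j) (.gvar w)
  | gvar (d w) : Globalized d (.gvar w) (.gvar w)
  | app {d a b a' b'} : Globalized d a a' → Globalized d b b' → Globalized d (.app a b) (.app a' b')
  | lam {d a a'} : Globalized (d + 1) a a' → Globalized d (.lam a) (.lam a')

namespace Globalized

theorem refl (d : ℕ) (t : GTerm) : Globalized d t t := by
  induction t generalizing d with
  | var j => exact .var d j
  | app a b iha ihb => exact .app (iha d) (ihb d)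
  | lam a ih => exact .lam (ih (d + 1))
  | gvar w => exact .gvar d w

theorem trans {d : ℕ} {a b c : GTerm} (hab : Globalized d a b) (hbc : Globalized d b c) :
    Globalized d a c := by
  induction hab generalizing c with
  | var => exact hbc
  | free d j w hdj => cases hbc; exact .free d j _ hdj
  | gvar => exact hbc
  | app _ _ iha ihb => cases hbc with | app ha hb => exact .app (iha ha) (ihb hb)
  | lam _ ih => cases hbc with | lam ha => exact .lam (ih ha)

theorem substAux {d d' : ℕ} (h : d ≤ d') (w v : GTerm) :
    Globalized d v (substAux 0 (.gvar w) d' v) := by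
  induction v generalizing d d' with
  | var j =>
    simp only [HashAlpha.substAux]
    split
    · exact .free d j w (by omega)
    · exact .var d j
  | app a b iha ihb => exact .app (iha h) (ihb h)
  | lam a ih => exact .lam (ih (by omega))
  | gvar a => exact .gvar d a

theorem eq_var_of_lt {d j : ℕ} {u : GTerm} (h : Globalized d (.var j) u) (hj : j < d) :
    u = .var j := by
  cases h
  · rfl
  · omega

theorem head_eq {d : ℕ} {v u : GTerm} (h : Globalized d v u) (hv : ∀ j, v ≠ .var j) :
    u.head = v.head := by
  cases h <;> simp_all [head]

end Globalized

namespace GTerm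

def resolve : GTerm → Pos → Option GTerm
  | t, [] => some t
  | .app a _, .left :: p => a.resolve p
  | .app _ b, .right :: p => b.resolve p
  | .lam s, .down :: p => (subst 0 (.gvar (.lam s)) s).resolve p
  | _, _ => none

@[simp] theorem resolve_nil (t : GTerm) : t.resolve [] = some t := by cases t <;> rfl

theorem resolve_append (t : GTerm) (p q : Pos) :
    t.resolve (p ++ q) = (t.resolve p).bind (·.resolve q) := by
  induction p generalizing t with
  | nil => simp
  | cons x p ih => cases t <;> cases x <;> simp [resolve, ih]

theorem isSome_resolve (t : GTerm) (p : Pos) : (t.resolve p).isSome = (t.index p).isSome := by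
  induction p generalizing t with
  | nil => simp
  | cons x p ih =>
    cases t <;> cases x <;> simp [resolve, GTerm.index, ih, subst, index_substAux_gvar]

theorem index_resolve {t u v : GTerm} {p r : Pos} (hu : t.resolve p = some u)
    (hv : t.index (p ++ r) = some v) :
    ∃ x, u.index r = some x ∧ Globalized (lamDepth r) v x := by
  induction p generalizing t v with
  | nil => simp_all [Globalized.refl]
  | cons y p ih =>
    cases t <;> cases y <;>
      simp only [resolve, List.cons_append, GTerm.index, reduceCtorEq] at hu hv
    · exact ih hu hv
    · exact ih hu hv
    · rename_i s
      have hs : (subst 0 (.gvar (.lam s)) s).index (p ++ r)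
          = some (HashAlpha.substAux 0 (.gvar (.lam s)) (lamDepth (p ++ r)) v) := by
        simp [subst, index_substAux_gvar, hv]
      obtain ⟨x, hx, hvx⟩ := ih hu hs
      exact ⟨x, hx, (Globalized.substAux (by simp) _ v).trans hvx⟩

theorem resolve_of_index_eq_gvar {u w : GTerm} {r : Pos} (h : u.index r = some (.gvar w)) :
    u.resolve r = some (.gvar w) := by
  induction r generalizing u with
  | nil => simp_all
  | cons x r ih =>
    cases u <;> cases x <;> simp only [GTerm.index, reduceCtorEq] at h <;> simp only [resolve]
    · exact ih h
    · exact ih h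
    · exact ih (by simp [subst, index_substAux_gvar, h, HashAlpha.substAux])

theorem resolve_of_index_eq_var {u : GTerm} {r : Pos} {j : ℕ} (h : u.index r = some (.var j))
    (hj : lamDepth r ≤ j) : u.resolve r = some (.var j) := by
  induction r generalizing u with
  | nil => simp_all
  | cons x r ih =>
    cases u <;> cases x <;> simp only [GTerm.index, reduceCtorEq] at h <;> simp only [resolve] <;>
      simp only [lamDepth_cons, reduceCtorEq, if_false, if_true] at hj
    · exact ih h hj
    · exact ih h hj
    · refine ih ?_ (by omega)
      simp [subst, index_substAux_gvar, h, HashAlpha.substAux]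
      omega

theorem valid_append_iff_of_resolve {t u : GTerm} {p r : Pos} (h : t.resolve p = some u) :
    p ++ r ∈ Valid t ↔ r ∈ Valid u := by
  rw [mem_valid, mem_valid, ← isSome_resolve, ← isSome_resolve, resolve_append, h]
  rfl

theorem resolve_of_bound {t : GTerm} {q r : Pos}
    (h : t.index (q ++ .down :: r) = some (.var (lamDepth r))) :
    ∃ s, t.resolve q = some (.lam s) ∧ t.resolve (q ++ .down :: r) = some (.gvar (.lam s)) := by
  have hq : (t.resolve q).isSome := by
    rw [isSome_resolve]
    exact valid_of_prefix ⟨.down :: r, rfl⟩ (by simp [mem_valid, h])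
  obtain ⟨u, hu⟩ := Option.isSome_iff_exists.1 hq
  obtain ⟨x, hx, hvx⟩ := index_resolve hu h
  obtain rfl := hvx.eq_var_of_lt (by simp)
  cases u <;> simp only [GTerm.index, reduceCtorEq] at hx
  rename_i s
  refine ⟨s, hu, ?_⟩
  rw [resolve_append, hu, Option.bind_some, resolve]
  exact resolve_of_index_eq_gvar
    (by simp [subst, index_substAux_gvar, hx, HashAlpha.substAux, shiftAux])

theorem index_resolve_of_free {t u : GTerm} {p r : Pos} {j : ℕ} (hu : t.resolve p = some u)
    (hv : t.index (p ++ r) = some (.var j)) (hj : lamDepth r ≤ j) :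
    u.index r = t.resolve (p ++ r) := by
  obtain ⟨x, hx, hvx⟩ := index_resolve hu hv
  rw [hx, resolve_append, hu, Option.bind_some]
  cases hvx with
  | var => exact (resolve_of_index_eq_var hx hj).symm
  | free => exact (resolve_of_index_eq_gvar hx).symm

theorem exists_binder_of_resolve_eq_gvar {t w : GTerm} {p : Pos} (hp : t.IsPure)
    (hc : Closed t) (h : t.resolve p = some (.gvar w)) :
    ∃ q r s, p = q ++ .down :: r ∧ t.index p = some (.var (lamDepth r)) ∧
      t.resolve q = some (.lam s) ∧ w = .lam s := by
  have hvalid : (t.index p).isSome := by rw [← isSome_resolve, h]; rfl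
  obtain ⟨v, hv⟩ := Option.isSome_iff_exists.1 hvalid
  obtain ⟨x, hx, hvx⟩ := index_resolve h (r := []) (by simpa using hv)
  simp only [index_nil, Option.some.injEq] at hx
  subst hx
  cases hvx with
  | gvar => simpa [IsPure] using hp.index hv
  | free _ j =>
    obtain ⟨q, r, rfl, rfl⟩ := exists_binder (hc.lt_lamDepth hv)
    obtain ⟨s, hs, hs'⟩ := resolve_of_bound hv
    rw [h, Option.some.injEq, GTerm.gvar.injEq] at hs'
    exact ⟨q, r, s, rfl, hv, hs, hs'⟩

end GTerm

@[simp] theorem globalizeNaive_var (i : ℕ) : globalizeNaive (.var i) = .var i := by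
  rw [globalizeNaive]

@[simp] theorem globalizeNaive_gvar (w : GTerm) : globalizeNaive (.gvar w) = .gvar w := by
  rw [globalizeNaive]

@[simp] theorem globalizeNaive_app (a b : GTerm) :
    globalizeNaive (.app a b) = .app (globalizeNaive a) (globalizeNaive b) := by
  rw [globalizeNaive]

@[simp] theorem globalizeNaive_lam (s : GTerm) :
    globalizeNaive (.lam s) = .lam (globalizeNaive (subst 0 (.gvar (.lam s)) s)) := by
  rw [globalizeNaive]

theorem index_globalizeNaive (t : GTerm) (p : Pos) :
    (globalizeNaive t).index p = (t.resolve p).map globalizeNaive := by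
  induction p generalizing t with
  | nil => simp
  | cons x p ih => cases t <;> cases x <;> simp [GTerm.index, resolve, ih]

theorem eq_gvar_of_globalizeNaive_eq_gvar {u w : GTerm} (h : globalizeNaive u = .gvar w) :
    u = .gvar w := by
  cases u <;> simp_all

theorem valid_iff_globalizeNaive {t : GTerm} {p : Pos} :
    p ∈ Valid t ↔ ((globalizeNaive t).index p).isSome := by
  rw [index_globalizeNaive, Option.isSome_map, isSome_resolve, mem_valid]

def GlobalizeNaiveEq (n₁ n₂ : GTerm × Pos) : Prop :=
  n₁.1.IsPure ∧ n₂.1.IsPure ∧ Closed n₁.1 ∧ Closed n₂.1 ∧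
    (globalizeNaive n₁.1).index n₁.2 = (globalizeNaive n₂.1).index n₂.2

namespace GlobalizeNaiveEq

theorem symm {n₁ n₂ : GTerm × Pos} (h : GlobalizeNaiveEq n₁ n₂) : GlobalizeNaiveEq n₂ n₁ :=
  let ⟨hp₁, hp₂, hc₁, hc₂, h⟩ := h
  ⟨hp₂, hp₁, hc₂, hc₁, h.symm⟩

theorem exists_trans {n₁ n₂ m₁ : GTerm × Pos} {l : Lab} (h : GlobalizeNaiveEq n₁ n₂)
    (ht : Trans n₁ l m₁) : ∃ m₂, Trans n₂ l m₂ ∧ GlobalizeNaiveEq m₁ m₂ := by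
  obtain ⟨t₂, p₂⟩ := n₂
  obtain ⟨hp₁, hp₂, hc₁, hc₂, heq⟩ := h
  cases ht with
  | dir t₁ p₁ x hv =>
    have heq' : (globalizeNaive t₁).index (p₁ ++ [x]) = (globalizeNaive t₂).index (p₂ ++ [x]) := by
      rw [index_append, index_append, heq]
    refine ⟨_, Trans.dir t₂ p₂ x ?_, hp₁, hp₂, hc₁, hc₂, heq'⟩
    rw [valid_iff_globalizeNaive, ← heq']
    exact valid_iff_globalizeNaive.1 hv
  | up t₁ q r hv =>
    obtain ⟨s, hq, hs⟩ := resolve_of_bound hv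
    have hres₂ : t₂.resolve p₂ = some (.gvar (.lam s)) := by
      rw [index_globalizeNaive, index_globalizeNaive, hs, Option.map_some, globalizeNaive_gvar,
        eq_comm, Option.map_eq_some_iff] at heq
      obtain ⟨u, hu, hgu⟩ := heq
      rw [hu, eq_gvar_of_globalizeNaive_eq_gvar hgu]
    obtain ⟨q₂, r₂, s₂, rfl, hv₂, hq₂, hss⟩ := exists_binder_of_resolve_eq_gvar hp₂ hc₂ hres₂
    refine ⟨_, Trans.up t₂ q₂ r₂ hv₂, hp₁, hp₂, hc₁, hc₂, ?_⟩
    simp only [index_globalizeNaive, hq, hq₂, hss]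

theorem isBisim : IsBisim GlobalizeNaiveEq := fun _ _ h _ =>
  ⟨fun _ ht => h.exists_trans ht,
    fun _ ht => (h.symm.exists_trans ht).imp fun _ ⟨ht', h'⟩ => ⟨ht', h'.symm⟩⟩

end GlobalizeNaiveEq

theorem binder_below_or_above {p r β ρ : Pos} (h : p ++ r = β ++ .down :: ρ) :
    (∃ c, β = p ++ c ∧ r = c ++ .down :: ρ) ∨ (β.length < p.length ∧ lamDepth r ≤ lamDepth ρ) := by
  rcases List.append_eq_append_iff.1 h with h' | ⟨_ | ⟨x, c⟩, rfl, hρ⟩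
  · exact .inl h'
  · exact .inl ⟨[], by simp_all⟩
  · simp only [List.cons_append, List.cons.injEq] at hρ
    exact .inr ⟨by simp, by simp [hρ.2]⟩

section Resolution

variable {t₁ t₂ u₁ u₂ : GTerm} {p₁ p₂ r β₁ β₂ ρ₁ ρ₂ : Pos}

theorem index_resolve_eq_of_binders_above (hu₁ : t₁.resolve p₁ = some u₁)
    (hu₂ : t₂.resolve p₂ = some u₂)
    (hs₁ : p₁ ++ r = β₁ ++ .down :: ρ₁) (hs₂ : p₂ ++ r = β₂ ++ .down :: ρ₂)
    (hv₁ : t₁.index (p₁ ++ r) = some (.var (lamDepth ρ₁)))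
    (hv₂ : t₂.index (p₂ ++ r) = some (.var (lamDepth ρ₂)))
    (hr₁ : lamDepth r ≤ lamDepth ρ₁) (hr₂ : lamDepth r ≤ lamDepth ρ₂)
    (hβ : t₁.resolve β₁ = t₂.resolve β₂) : u₁.index r = u₂.index r := by
  obtain ⟨s₁, hβ₁, hb₁⟩ := resolve_of_bound (hs₁ ▸ hv₁)
  obtain ⟨s₂, hβ₂, hb₂⟩ := resolve_of_bound (hs₂ ▸ hv₂)
  rw [index_resolve_of_free hu₁ hv₁ hr₁, index_resolve_of_free hu₂ hv₂ hr₂, hs₁, hs₂, hb₁, hb₂]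
  rw [hβ₁, hβ₂, Option.some.injEq, GTerm.lam.injEq] at hβ
  rw [hβ]

/-- A variable is bound either below both nodes, at corresponding binders, or above both, at
bisimilar binders to which `ih` applies. -/
theorem head_index_resolve_eq (hp₁ : t₁.IsPure) (hc₁ : Closed t₁)
    (hb : Bisim (t₁, p₁) (t₂, p₂)) (hv₁ : p₁ ∈ Valid t₁) (hv₂ : p₂ ∈ Valid t₂)
    (hu₁ : t₁.resolve p₁ = some u₁) (hu₂ : t₂.resolve p₂ = some u₂)
    (ih : ∀ β₁ β₂, β₁.length < p₁.length → β₂.length < p₂.length → β₁ ∈ Valid t₁ →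
      β₂ ∈ Valid t₂ → Bisim (t₁, β₁) (t₂, β₂) → t₁.resolve β₁ = t₂.resolve β₂) :
    (u₁.index r).map head = (u₂.index r).map head := by
  by_cases hr₁ : p₁ ++ r ∈ Valid t₁
  swap
  · have hr₂ : p₂ ++ r ∉ Valid t₂ := by rwa [← hb.valid_append_iff hv₁ hv₂]
    rw [valid_append_iff_of_resolve hu₁, mem_valid, Option.not_isSome_iff_eq_none] at hr₁
    rw [valid_append_iff_of_resolve hu₂, mem_valid, Option.not_isSome_iff_eq_none] at hr₂
    rw [hr₁, hr₂]
  obtain ⟨hr₂, hbr⟩ := hb.append hv₂ hr₁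
  obtain ⟨v₁, hv₁r⟩ := Option.isSome_iff_exists.1 hr₁
  obtain ⟨v₂, hv₂r⟩ := Option.isSome_iff_exists.1 hr₂
  obtain ⟨x, hx, hvx⟩ := index_resolve hu₁ hv₁r
  obtain ⟨y, hy, hvy⟩ := index_resolve hu₂ hv₂r
  cases v₁ with
  | gvar => simpa [IsPure] using hp₁.index hv₁r
  | app _ _ | lam _ =>
    have hv := hbr.head_eq hv₁r hv₂r (by simp) (by simp)
    rw [hx, hy, Option.map_some, Option.map_some, hvx.head_eq (by simp), hv,
      hvy.head_eq (by cases v₂ <;> simp_all [head])]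
  | var j =>
    obtain ⟨β₁, ρ₁, hs₁, rfl⟩ := exists_binder (hc₁.lt_lamDepth hv₁r)
    obtain ⟨m₂, hm₂, hbβ⟩ := hbr.exists_trans (trans_up_iff.2 ⟨β₁, ρ₁, hs₁, hv₁r, rfl⟩)
    obtain ⟨β₂, ρ₂, hs₂, hv₂r', rfl⟩ := trans_up_iff.1 hm₂
    obtain rfl : v₂ = .var (lamDepth ρ₂) := by simpa [hv₂r] using hv₂r'
    rcases binder_below_or_above hs₁ with ⟨c, rfl, rfl⟩ | ⟨hβ₁, hρ₁⟩
    · have hβ₂ : β₂ = p₂ ++ c := hb.eq_append_of_prefix hv₂ hr₁ hr₂ ⟨_, rfl⟩ ⟨_, hs₂.symm⟩ hbβ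
      obtain rfl : ρ₁ = ρ₂ := by simpa [hβ₂] using hs₂
      rw [hx, hy, hvx.eq_var_of_lt (by simp; omega), hvy.eq_var_of_lt (by simp; omega)]
    rcases binder_below_or_above hs₂ with ⟨c, rfl, rfl⟩ | ⟨hβ₂, hρ₂⟩
    · have := hb.symm.eq_append_of_prefix hv₁ hr₂ hr₁ ⟨_, rfl⟩ ⟨_, hs₁.symm⟩ hbβ.symm
      simp [this] at hβ₁
    rw [index_resolve_eq_of_binders_above hu₁ hu₂ hs₁ hs₂ hv₁r hv₂r hρ₁ hρ₂
      (ih β₁ β₂ hβ₁ hβ₂ (valid_of_prefix ⟨_, hs₁.symm⟩ hr₁) (valid_of_prefix ⟨_, hs₂.symm⟩ hr₂)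
        hbβ)]

theorem resolve_eq_of_bisim (hp₁ : t₁.IsPure) (hc₁ : Closed t₁) (hb : Bisim (t₁, p₁) (t₂, p₂))
    (hv₁ : p₁ ∈ Valid t₁) (hv₂ : p₂ ∈ Valid t₂) : t₁.resolve p₁ = t₂.resolve p₂ := by
  induction hn : p₁.length + p₂.length using Nat.strong_induction_on generalizing p₁ p₂ with
  | _ n ih =>
  obtain ⟨u₁, hu₁⟩ := Option.isSome_iff_exists.1 ((isSome_resolve t₁ p₁).trans hv₁)
  obtain ⟨u₂, hu₂⟩ := Option.isSome_iff_exists.1 ((isSome_resolve t₂ p₂).trans hv₂)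
  rw [hu₁, hu₂, ext_of_head_index fun r => head_index_resolve_eq hp₁ hc₁ hb hv₁ hv₂ hu₁ hu₂
    fun β₁ β₂ hβ₁ hβ₂ hvβ₁ hvβ₂ hbβ => ih _ (by omega) hbβ hvβ₁ hvβ₂ rfl]

end Resolution

/-- bisimilarity coincides with equality after naive globalization. -/
theorem bisim_iff_globalizeNaive (t₁ t₂ : GTerm) (p₁ p₂ : Pos)
    (h₁ : t₁.IsPure) (h₂ : t₂.IsPure)
    (n₁ : IsNode t₁ p₁) (n₂ : IsNode t₂ p₂) :
    Bisim (t₁, p₁) (t₂, p₂) ↔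
      (globalizeNaive t₁).index p₁ = (globalizeNaive t₂).index p₂ := by
  constructor
  · intro hb
    rw [index_globalizeNaive, index_globalizeNaive, resolve_eq_of_bisim h₁ n₁.1 hb n₁.2 n₂.2]
  · exact fun h => ⟨GlobalizeNaiveEq, GlobalizeNaiveEq.isBisim, h₁, h₂, n₁.1, n₂.1, h⟩

end HashAlpha
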